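/- Let f be the decision rule of a soft regression forest with T trees on ℝ^{d_x}, let W_max be an upper bound on the Euclidean norms ‖w_{i,t}‖ of all internal-node weight vectors, let Π_max be an upper bound on the Euclidean norms ‖π_{l,t}‖ of all leaf decision vectors, and let D_max ≥ 1 be such that every root-to-leaf path in every tree contains at most D_max − 1 internal nodes. Then f is Lipschitz continuous with constant L = W_max · Π_max · (D_max − 1); that is, ‖f(x₁) − f(x₂)‖ ≤ W_max Π_max (D_max − 1) · ‖x₁ − x₂‖ for all x₁, x₂ ∈ ℝ^{d_x}. -/

import Mathlib

open scoped BigOperators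

/-- The sigmoid function `S(z) = 1/(1+e^{-z})`. -/
noncomputable def sigmoid (z : ℝ) : ℝ := 1 / (1 + Real.exp (-z))

/-- Route probability of the leaf indexed by `l : Fin D → Bool` in a full binary soft
regression tree of depth `D` on `ℝ^{d_x}`.  Internal nodes are indexed by the boolean
prefix (of length `< D`) describing the root-to-node path; `l k = true` means the path
to leaf `l` goes left at level `k` (factor `S(wᵀx + b)`), `l k = false` means it goes
right (factor `1 - S(wᵀx + b)`). -/
noncomputable def routeProb (dx D : ℕ)
    (w : List Bool → EuclideanSpace ℝ (Fin dx)) (b : List Bool → ℝ)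
    (l : Fin D → Bool) (x : EuclideanSpace ℝ (Fin dx)) : ℝ :=
  ∏ k : Fin D,
    if l k then
      sigmoid ((inner ℝ (w ((List.ofFn l).take (k : ℕ))) x : ℝ) + b ((List.ofFn l).take (k : ℕ)))
    else
      1 - sigmoid ((inner ℝ (w ((List.ofFn l).take (k : ℕ))) x : ℝ) + b ((List.ofFn l).take (k : ℕ)))

/-- The decision rule of a soft regression forest with `T` trees: tree `t` has depth
`Dt t`, internal-node weights `w t`, biases `b t`, and leaf decision vectors
`leaf t l ∈ ℝ^{d_z}`; the output is `f(x) = (1/T) Σ_t Σ_l p_{l,t}(x) · π_{l,t}`. -/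
noncomputable def srf (dx dz T : ℕ) (Dt : Fin T → ℕ)
    (w : Fin T → List Bool → EuclideanSpace ℝ (Fin dx))
    (b : Fin T → List Bool → ℝ)
    (leaf : (t : Fin T) → (Fin (Dt t) → Bool) → EuclideanSpace ℝ (Fin dz))
    (x : EuclideanSpace ℝ (Fin dx)) : EuclideanSpace ℝ (Fin dz) :=
  (T : ℝ)⁻¹ • ∑ t, ∑ l : Fin (Dt t) → Bool, routeProb dx (Dt t) (w t) (b t) l x • leaf t l

/-!
At a tree of depth `D + 1` the output is `S(a(x)) f₁(x) + (1 - S(a(x))) f₂(x)`, a convex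
combination of the outputs `f₁, f₂` of the two subtrees, where `a(x) = ⟪w, x⟫ + b` is the root's
affine score. Both `fᵢ` are convex combinations of leaf vectors, hence bounded by `Π_max`, and `S` is
`1/4`-Lipschitz, so moving the mixing weight costs at most `(1/4) W_max ‖Δx‖ · 2 Π_max`. By
induction a tree of depth `D` is `D W_max Π_max`-Lipschitz, and averaging trees keeps the bound.
-/

open Finset

theorem sigmoid_eq_real_sigmoid : sigmoid = Real.sigmoid := by
  funext z
  rw [sigmoid, Real.sigmoid_def, one_div]

theorem sigmoid_nonneg (z : ℝ) : 0 ≤ sigmoid z :=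
  sigmoid_eq_real_sigmoid ▸ Real.sigmoid_nonneg z

theorem sigmoid_le_one (z : ℝ) : sigmoid z ≤ 1 :=
  sigmoid_eq_real_sigmoid ▸ Real.sigmoid_le_one z

theorem lipschitzWith_sigmoid : LipschitzWith 4⁻¹ sigmoid := by
  rw [sigmoid_eq_real_sigmoid]
  refine lipschitzWith_of_nnnorm_deriv_le differentiable_sigmoid fun z => ?_
  have h0 := Real.sigmoid_nonneg z
  have h1 := Real.sigmoid_le_one z
  rw [Real.deriv_sigmoid, ← NNReal.coe_le_coe, coe_nnnorm, Real.norm_eq_abs,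
    abs_of_nonneg (mul_nonneg h0 (sub_nonneg.mpr h1))]
  push_cast
  nlinarith [sq_nonneg (Real.sigmoid z - 2⁻¹)]

theorem abs_sigmoid_inner_add_sub_le {E : Type*} [SeminormedAddCommGroup E]
    [InnerProductSpace ℝ E] (w x₁ x₂ : E) (b : ℝ) :
    |sigmoid (inner ℝ w x₁ + b) - sigmoid (inner ℝ w x₂ + b)| ≤ 4⁻¹ * (‖w‖ * ‖x₁ - x₂‖) := by
  have hS := lipschitzWith_sigmoid.dist_le_mul (inner ℝ w x₁ + b) (inner ℝ w x₂ + b)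
  rw [Real.dist_eq, Real.dist_eq, add_sub_add_right_eq_sub, ← inner_sub_right] at hS
  push_cast at hS
  exact hS.trans (mul_le_mul_of_nonneg_left (abs_real_inner_le_norm w _) (by norm_num))

theorem Fin.sum_pi_succ {n : ℕ} {α M : Type*} [Fintype α] [AddCommMonoid M]
    (f : (Fin (n + 1) → α) → M) :
    ∑ l, f l = ∑ a, ∑ t : Fin n → α, f (Fin.cons a t) := by
  rw [← (Fin.consEquiv fun _ => α).sum_comp, Fintype.sum_prod_type]
  rfl

theorem norm_convexComb_sub_convexComb_le {E : Type*} [SeminormedAddCommGroup E]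
    [NormedSpace ℝ E] {s s' δ P : ℝ} {A₁ A₂ B₁ B₂ : E} (hs₀ : 0 ≤ s) (hs₁ : s ≤ 1)
    (hA : ‖A₁ - A₂‖ ≤ δ) (hB : ‖B₁ - B₂‖ ≤ δ) (hA₂ : ‖A₂‖ ≤ P) (hB₂ : ‖B₂‖ ≤ P) :
    ‖(s • A₁ + (1 - s) • B₁) - (s' • A₂ + (1 - s') • B₂)‖ ≤ δ + |s - s'| * (2 * P) := by
  have hsplit : (s • A₁ + (1 - s) • B₁) - (s' • A₂ + (1 - s') • B₂) =
      s • (A₁ - A₂) + (1 - s) • (B₁ - B₂) + (s - s') • (A₂ - B₂) := by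
    module
  have hAB : ‖A₂ - B₂‖ ≤ 2 * P := by linarith [norm_sub_le A₂ B₂]
  rw [hsplit]
  refine (norm_add₃_le ..).trans ?_
  rw [norm_smul, norm_smul, norm_smul, Real.norm_of_nonneg hs₀,
    Real.norm_of_nonneg (sub_nonneg.mpr hs₁), Real.norm_eq_abs]
  nlinarith [mul_le_mul_of_nonneg_left hA hs₀, mul_le_mul_of_nonneg_left hB (sub_nonneg.mpr hs₁),
    mul_le_mul_of_nonneg_left hAB (abs_nonneg (s - s'))]

theorem norm_inv_natCast_smul_sum_le {E : Type*} [SeminormedAddCommGroup E] [NormedSpace ℝ E]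
    {n : ℕ} {v : Fin n → E} {C : ℝ} (hC : 0 ≤ C) (hv : ∀ i, ‖v i‖ ≤ C) :
    ‖(n : ℝ)⁻¹ • ∑ i, v i‖ ≤ C := by
  rcases n.eq_zero_or_pos with rfl | hn
  · simpa using hC
  calc ‖(n : ℝ)⁻¹ • ∑ i, v i‖ ≤ (n : ℝ)⁻¹ * ∑ _i : Fin n, C := by
        rw [norm_smul, Real.norm_of_nonneg (by positivity)]
        exact mul_le_mul_of_nonneg_left (norm_sum_le_of_le _ fun i _ => hv i) (by positivity)
    _ = C := by
        rw [sum_const, card_univ, Fintype.card_fin, nsmul_eq_mul, inv_mul_cancel_left₀]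
        exact_mod_cast hn.ne'

section SoftTree

variable {dx D : ℕ} {F : Type*} [SeminormedAddCommGroup F] [NormedSpace ℝ F]
    (w : List Bool → EuclideanSpace ℝ (Fin dx)) (b : List Bool → ℝ)

theorem routeProb_cons (h : Bool) (t : Fin D → Bool) (x : EuclideanSpace ℝ (Fin dx)) :
    routeProb dx (D + 1) w b (Fin.cons h t) x =
      (if h then sigmoid (inner ℝ (w []) x + b []) else 1 - sigmoid (inner ℝ (w []) x + b [])) *
        routeProb dx D (fun pre => w (h :: pre)) (fun pre => b (h :: pre)) t x := by
  have htake (k : Fin D) : (List.ofFn (Fin.cons h t : Fin (D + 1) → Bool)).take (k.succ : ℕ) =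
      h :: (List.ofFn t).take (k : ℕ) := by
    simp [List.ofFn_succ]
  simp only [routeProb, Fin.prod_univ_succ, Fin.cons_zero, Fin.cons_succ, htake, Fin.val_zero,
    List.take_zero]

theorem routeProb_nonneg (l : Fin D → Bool) (x : EuclideanSpace ℝ (Fin dx)) :
    0 ≤ routeProb dx D w b l x := by
  refine prod_nonneg fun k _ => ?_
  split
  · exact sigmoid_nonneg _
  · exact sub_nonneg.mpr (sigmoid_le_one _)

theorem sum_routeProb (x : EuclideanSpace ℝ (Fin dx)) :
    ∑ l : Fin D → Bool, routeProb dx D w b l x = 1 := by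
  induction D generalizing w b with
  | zero => simp [routeProb]
  | succ D ih => simp [Fin.sum_pi_succ, routeProb_cons, ← mul_sum, ih]

noncomputable def softTree (leaf : (Fin D → Bool) → F) (x : EuclideanSpace ℝ (Fin dx)) : F :=
  ∑ l, routeProb dx D w b l x • leaf l

theorem softTree_succ (leaf : (Fin (D + 1) → Bool) → F) (x : EuclideanSpace ℝ (Fin dx)) :
    softTree w b leaf x =
      sigmoid (inner ℝ (w []) x + b []) •
          softTree (fun pre => w (true :: pre)) (fun pre => b (true :: pre))
            (fun t => leaf (Fin.cons true t)) x +
        (1 - sigmoid (inner ℝ (w []) x + b [])) •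
          softTree (fun pre => w (false :: pre)) (fun pre => b (false :: pre))
            (fun t => leaf (Fin.cons false t)) x := by
  simp [softTree, Fin.sum_pi_succ, routeProb_cons, smul_sum, mul_smul]

theorem norm_softTree_le (leaf : (Fin D → Bool) → F) {P : ℝ} (hleaf : ∀ l, ‖leaf l‖ ≤ P)
    (x : EuclideanSpace ℝ (Fin dx)) : ‖softTree w b leaf x‖ ≤ P := by
  calc ‖softTree w b leaf x‖ ≤ ∑ l, routeProb dx D w b l x * P := by
        refine norm_sum_le_of_le _ fun l _ => ?_
        rw [norm_smul, Real.norm_of_nonneg (routeProb_nonneg w b l x)]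
        exact mul_le_mul_of_nonneg_left (hleaf l) (routeProb_nonneg w b l x)
    _ = P := by rw [← sum_mul, sum_routeProb, one_mul]

theorem norm_softTree_sub_le (leaf : (Fin D → Bool) → F) {W P : ℝ}
    (hw : ∀ pre : List Bool, pre.length < D → ‖w pre‖ ≤ W)
    (hleaf : ∀ l, ‖leaf l‖ ≤ P) (x₁ x₂ : EuclideanSpace ℝ (Fin dx)) :
    ‖softTree w b leaf x₁ - softTree w b leaf x₂‖ ≤ D * W * P * ‖x₁ - x₂‖ := by
  induction D generalizing w b with
  | zero => simp [softTree, routeProb]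
  | succ D ih =>
    have hw' (h : Bool) (pre : List Bool) (hpre : pre.length < D) : ‖w (h :: pre)‖ ≤ W :=
      hw (h :: pre) (by simpa using hpre)
    have hW₀ : 0 ≤ W := (norm_nonneg _).trans (hw [] (by simp))
    have hP₀ : 0 ≤ P := (norm_nonneg _).trans (hleaf default)
    have hroot : |sigmoid (inner ℝ (w []) x₁ + b []) - sigmoid (inner ℝ (w []) x₂ + b [])| ≤
        4⁻¹ * (W * ‖x₁ - x₂‖) :=
      (abs_sigmoid_inner_add_sub_le _ _ _ _).trans (by gcongr; exact hw [] (by simp))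
    rw [softTree_succ, softTree_succ]
    refine (norm_convexComb_sub_convexComb_le (sigmoid_nonneg _) (sigmoid_le_one _)
      (ih _ _ _ (hw' true) (fun _ => hleaf _)) (ih _ _ _ (hw' false) (fun _ => hleaf _))
      (norm_softTree_le _ _ _ (fun _ => hleaf _) x₂)
      (norm_softTree_le _ _ _ (fun _ => hleaf _) x₂)).trans ?_
    calc _ ≤ D * W * P * ‖x₁ - x₂‖ + 4⁻¹ * (W * ‖x₁ - x₂‖) * (2 * P) := by gcongr
      _ ≤ (D + 1 : ℕ) * W * P * ‖x₁ - x₂‖ := by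
        push_cast
        nlinarith [mul_nonneg (mul_nonneg hW₀ hP₀) (norm_nonneg (x₁ - x₂))]

end SoftTree

/-- The SRF decision rule is Lipschitz continuous with constant
`W_max · Π_max · (D_max − 1)`, where `W_max` bounds the norms of all internal-node
weight vectors, `Π_max` bounds the norms of all leaf decision vectors, and every
root-to-leaf path in every tree contains at most `D_max − 1` internal nodes. -/
theorem srf_lipschitz (dx dz T : ℕ) (Dt : Fin T → ℕ)
    (w : Fin T → List Bool → EuclideanSpace ℝ (Fin dx))
    (b : Fin T → List Bool → ℝ)
    (leaf : (t : Fin T) → (Fin (Dt t) → Bool) → EuclideanSpace ℝ (Fin dz))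
    (Wmax Pimax : ℝ) (hWmax0 : 0 ≤ Wmax) (hPimax0 : 0 ≤ Pimax)
    (Dmax : ℕ) (hDmax : 1 ≤ Dmax)
    (hW : ∀ t (pre : List Bool), pre.length < Dt t → ‖w t pre‖ ≤ Wmax)
    (hPi : ∀ t l, ‖leaf t l‖ ≤ Pimax)
    (hdepth : ∀ t, Dt t ≤ Dmax - 1) :
    ∀ x₁ x₂ : EuclideanSpace ℝ (Fin dx),
      ‖srf dx dz T Dt w b leaf x₁ - srf dx dz T Dt w b leaf x₂‖ ≤
        Wmax * Pimax * ((Dmax : ℝ) - 1) * ‖x₁ - x₂‖ := by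
  intro x₁ x₂
  have hDt (t : Fin T) : (Dt t : ℝ) ≤ Dmax - 1 := by
    rw [← Nat.cast_one, ← Nat.cast_sub hDmax]
    exact_mod_cast hdepth t
  have hC : 0 ≤ Wmax * Pimax * ((Dmax : ℝ) - 1) * ‖x₁ - x₂‖ := by
    have : (0 : ℝ) ≤ Dmax - 1 := sub_nonneg.mpr (by exact_mod_cast hDmax)
    positivity
  have hsrf (x) : srf dx dz T Dt w b leaf x = (T : ℝ)⁻¹ • ∑ t, softTree (w t) (b t) (leaf t) x :=
    rfl
  rw [hsrf, hsrf, ← smul_sub, ← sum_sub_distrib]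
  refine norm_inv_natCast_smul_sum_le hC fun t => ?_
  calc _ ≤ Dt t * Wmax * Pimax * ‖x₁ - x₂‖ := norm_softTree_sub_le _ _ _ (hW t) (hPi t) x₁ x₂
    _ ≤ (Dmax - 1) * Wmax * Pimax * ‖x₁ - x₂‖ := by gcongr; exact hDt t
    _ = Wmax * Pimax * ((Dmax : ℝ) - 1) * ‖x₁ - x₂‖ := by ring
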